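/- arXiv:2510.07235 — 3 statements merged into one kernel-verified Lean document; each statement's English description precedes it below -/
import Mathlib

section
/- Let F : [0,1] → ℝ be twice continuously differentiable with derivative f = F′. Then, uniformly for y ∈ [0,1] as m → ∞, the Bernstein polynomial satisfies 𝓑_m(F)(y) = F(y) + (y(1−y)/(2m)) f′(y) + o(m⁻¹); that is, sup_{y∈[0,1]} |𝓑_m(F)(y) − F(y) − (y(1−y)/(2m)) f′(y)| = o(m⁻¹). -/
open MeasureTheory ProbabilityTheory Filter Asymptotics

noncomputable section

/-- Bernstein basis polynomial `b_{m,k}(y) = C(m,k) y^k (1-y)^(m-k)`. -/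
def bern (m k : ℕ) (y : ℝ) : ℝ := (m.choose k : ℝ) * y ^ k * (1 - y) ^ (m - k)

/-- Bernstein smoothing (the Bernstein operator `𝓑_m`) applied to a function `G`. -/
def bsmooth (m : ℕ) (G : ℝ → ℝ) (y : ℝ) : ℝ :=
  ∑ k ∈ Finset.range (m + 1), G ((k : ℝ) / (m : ℝ)) * bern m k y


/-!
Expand `F` to second order around `y`. The Bernstein operator reproduces constants, annihilates
`t - y` and sends `(t - y)²` to `y (1 - y) / m` (all read off from the factorial moments
`∑ k^{(j)} b_{m,k}(y) = m^{(j)} yʲ`), which yields the two main terms. By uniform continuity of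
`f'` the Taylor remainder is at most `ε (t - y)² + C_ε (t - y)⁴` on `[0,1]`, and the fourth central
moment is `O(m⁻²)`, so the remainder contributes at most `ε / m + C_ε / m²`.
-/

open Finset Set

theorem Nat.cast_descFactorial_succ {S : Type*} [Ring S] (k j : ℕ) :
    (k.descFactorial (j + 1) : S) = (k - j) * k.descFactorial j := by
  rcases le_or_gt j k with hjk | hkj
  · rw [Nat.descFactorial_succ, Nat.cast_mul, Nat.cast_sub hjk]
  · simp [Nat.descFactorial_of_lt hkj]

lemma bern_nonneg {m k : ℕ} {y : ℝ} (hy : y ∈ Icc (0 : ℝ) 1) : 0 ≤ bern m k y := by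
  have := hy.1
  have := sub_nonneg.2 hy.2
  unfold bern
  positivity

lemma sum_bern (m : ℕ) (y : ℝ) : ∑ k ∈ range (m + 1), bern m k y = 1 := by
  have h := add_pow y (1 - y) m
  rw [add_sub_cancel, one_pow] at h
  rw [h]
  exact sum_congr rfl fun k _ => by rw [bern]; ring

lemma sum_descFactorial_mul_bern (j m : ℕ) (y : ℝ) :
    ∑ k ∈ range (m + 1), (k.descFactorial j : ℝ) * bern m k y = m.descFactorial j * y ^ j := by
  induction j generalizing m with
  | zero => simp [sum_bern]
  | succ j ih =>
    cases m with
    | zero => simp [bern]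
    | succ n =>
      have hterm (i : ℕ) : ((i + 1).descFactorial (j + 1) : ℝ) * bern (n + 1) (i + 1) y
          = (n + 1) * y * ((i.descFactorial j : ℝ) * bern n i y) := by
        have hc : ((n + 1) * n.choose i : ℝ) = (n + 1).choose (i + 1) * (i + 1) := by
          exact_mod_cast Nat.add_one_mul_choose_eq n i
        rw [bern, bern, Nat.succ_descFactorial_succ, Nat.add_sub_add_right]
        push_cast
        linear_combination (-(i.descFactorial j : ℝ) * y ^ (i + 1) * (1 - y) ^ (n - i)) * hc
      rw [sum_range_succ', Nat.zero_descFactorial_succ, Nat.cast_zero, zero_mul, add_zero,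
        sum_congr rfl fun i _ => hterm i, ← mul_sum, ih, Nat.succ_descFactorial_succ]
      push_cast
      ring

lemma sum_sub_mul_bern (m : ℕ) (y : ℝ) :
    ∑ k ∈ range (m + 1), ((k : ℝ) - m * y) * bern m k y = 0 := by
  have h (k : ℕ) : ((k : ℝ) - m * y) = k.descFactorial 1 - m * y * k.descFactorial 0 := by
    simp
  simp only [h, sub_mul, sum_sub_distrib, mul_assoc, ← mul_sum, sum_descFactorial_mul_bern]
  simp

lemma sum_sub_sq_mul_bern (m : ℕ) (y : ℝ) :
    ∑ k ∈ range (m + 1), ((k : ℝ) - m * y) ^ 2 * bern m k y = m * y * (1 - y) := by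
  have h (k : ℕ) : ((k : ℝ) - m * y) ^ 2 = k.descFactorial 2
      + (1 - 2 * m * y) * k.descFactorial 1 + (m * y) ^ 2 * k.descFactorial 0 := by
    simp only [Nat.cast_descFactorial_succ, Nat.descFactorial_zero, Nat.cast_one]; ring
  simp only [h, add_mul, sum_add_distrib, mul_assoc, ← mul_sum, sum_descFactorial_mul_bern]
  simp only [Nat.cast_descFactorial_succ, Nat.descFactorial_zero, Nat.cast_one]; ring

lemma sum_sub_pow_four_mul_bern (m : ℕ) (y : ℝ) :
    ∑ k ∈ range (m + 1), ((k : ℝ) - m * y) ^ 4 * bern m k y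
      = m * (y * (1 - y)) * (1 + 3 * (m - 2) * (y * (1 - y))) := by
  have h (k : ℕ) : ((k : ℝ) - m * y) ^ 4 = k.descFactorial 4
      + (6 - 4 * m * y) * k.descFactorial 3
      + (7 - 12 * m * y + 6 * (m * y) ^ 2) * k.descFactorial 2
      + (1 - 4 * m * y + 6 * (m * y) ^ 2 - 4 * (m * y) ^ 3) * k.descFactorial 1
      + (m * y) ^ 4 * k.descFactorial 0 := by
    simp only [Nat.cast_descFactorial_succ, Nat.descFactorial_zero, Nat.cast_one]; ring
  simp only [h, add_mul, sum_add_distrib, mul_assoc, ← mul_sum, sum_descFactorial_mul_bern]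
  simp only [Nat.cast_descFactorial_succ, Nat.descFactorial_zero, Nat.cast_one]; ring

lemma natCast_div_mem_Icc {k m : ℕ} (hk : k ≤ m) : (k : ℝ) / m ∈ Icc (0 : ℝ) 1 :=
  ⟨by positivity, div_le_one_of_le₀ (by exact_mod_cast hk) m.cast_nonneg⟩

lemma continuous_bsmooth (m : ℕ) (G : ℝ → ℝ) : Continuous (bsmooth m G) := by
  unfold bsmooth bern
  fun_prop

lemma bsmooth_add (m : ℕ) (G H : ℝ → ℝ) (y : ℝ) :
    bsmooth m (fun t => G t + H t) y = bsmooth m G y + bsmooth m H y := by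
  simp only [bsmooth, add_mul, sum_add_distrib]

lemma bsmooth_const_mul (m : ℕ) (c : ℝ) (G : ℝ → ℝ) (y : ℝ) :
    bsmooth m (fun t => c * G t) y = c * bsmooth m G y := by
  simp only [bsmooth, mul_assoc, ← mul_sum]

lemma abs_bsmooth_le {m : ℕ} {G H : ℝ → ℝ} {y : ℝ} (hy : y ∈ Icc (0 : ℝ) 1)
    (hGH : ∀ t ∈ Icc (0 : ℝ) 1, |G t| ≤ H t) : |bsmooth m G y| ≤ bsmooth m H y := by
  refine (abs_sum_le_sum_abs _ _).trans (sum_le_sum fun k hk => ?_)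
  rw [abs_mul, abs_of_nonneg (bern_nonneg hy)]
  exact mul_le_mul_of_nonneg_right
    (hGH _ (natCast_div_mem_Icc (Nat.lt_succ_iff.mp (mem_range.mp hk)))) (bern_nonneg hy)

lemma bsmooth_sub_pow {m : ℕ} (hm : m ≠ 0) (y : ℝ) (j : ℕ) :
    bsmooth m (fun t => (t - y) ^ j) y
      = (∑ k ∈ range (m + 1), ((k : ℝ) - m * y) ^ j * bern m k y) / (m : ℝ) ^ j := by
  rw [bsmooth, sum_div]
  refine sum_congr rfl fun k _ => ?_
  rw [show (k : ℝ) / m - y = (k - m * y) / m by field_simp, div_pow, div_mul_eq_mul_div]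

lemma bsmooth_const (m : ℕ) (c y : ℝ) : bsmooth m (fun _ => c) y = c := by
  rw [bsmooth, ← mul_sum, sum_bern, mul_one]

lemma bsmooth_sub_eq_zero {m : ℕ} (hm : m ≠ 0) (y : ℝ) : bsmooth m (fun t => t - y) y = 0 := by
  simpa [sum_sub_mul_bern] using bsmooth_sub_pow hm y 1

lemma bsmooth_sub_sq {m : ℕ} (hm : m ≠ 0) (y : ℝ) :
    bsmooth m (fun t => (t - y) ^ 2) y = y * (1 - y) / m := by
  rw [bsmooth_sub_pow hm, sum_sub_sq_mul_bern]
  field_simp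

lemma bsmooth_quadratic {m : ℕ} (hm : m ≠ 0) (a b c y : ℝ) :
    bsmooth m (fun t => a + b * (t - y) + c * (t - y) ^ 2) y = a + c * (y * (1 - y) / m) := by
  simp only [bsmooth_add, bsmooth_const, bsmooth_const_mul, bsmooth_sub_eq_zero hm,
    bsmooth_sub_sq hm, mul_zero, add_zero]

lemma bsmooth_sub_pow_four_le {m : ℕ} (hm : m ≠ 0) {y : ℝ} (hy : y ∈ Icc (0 : ℝ) 1) :
    bsmooth m (fun t => (t - y) ^ 4) y ≤ 1 / (m : ℝ) ^ 2 := by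
  rw [bsmooth_sub_pow hm, sum_sub_pow_four_mul_bern]
  set u := y * (1 - y)
  have hm1 : (1 : ℝ) ≤ m := by exact_mod_cast Nat.one_le_iff_ne_zero.mpr hm
  have hu0 : 0 ≤ u := mul_nonneg hy.1 (sub_nonneg.2 hy.2)
  have hu : u ≤ 1 / 4 := by nlinarith [sq_nonneg (y - 1 / 2)]
  have hnum : m * u * (1 + 3 * (m - 2) * u) ≤ (m : ℝ) ^ 2 := by
    have h1 : m * u ≤ (m : ℝ) ^ 2 / 4 := by nlinarith
    have h2 : (m : ℝ) ^ 2 * u ^ 2 ≤ (m : ℝ) ^ 2 / 16 := by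
      have : u ^ 2 ≤ 1 / 16 := by nlinarith
      nlinarith [sq_nonneg (m : ℝ)]
    nlinarith [mul_nonneg (by positivity : (0 : ℝ) ≤ m) (sq_nonneg u)]
  calc m * u * (1 + 3 * (m - 2) * u) / (m : ℝ) ^ 4 ≤ (m : ℝ) ^ 2 / (m : ℝ) ^ 4 := by gcongr
    _ = 1 / (m : ℝ) ^ 2 := by field_simp

lemma abs_taylor_two_le {F f f' : ℝ → ℝ} {y t K : ℝ}
    (hF : ∀ u ∈ uIcc y t, HasDerivWithinAt F (f u) (uIcc y t) u)
    (hf : ∀ u ∈ uIcc y t, HasDerivWithinAt f (f' u) (uIcc y t) u)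
    (hK : ∀ u ∈ uIcc y t, |f' u - f' y| ≤ K) :
    |F t - F y - f y * (t - y) - f' y / 2 * (t - y) ^ 2| ≤ K * (t - y) ^ 2 := by
  set s := uIcc y t
  have hys : y ∈ s := left_mem_uIcc
  have hK0 : 0 ≤ K := by simpa using hK y hys
  have hlin : ∀ u ∈ s, |f u - f y - f' y * (u - y)| ≤ K * |u - y| := by
    intro u hu
    have hderiv : ∀ v ∈ s, HasDerivWithinAt (fun w => f w - f' y * w) (f' v - f' y) s v :=
      fun v hv => (hf v hv).sub ((hasDerivWithinAt_id v s).const_mul (f' y) |>.congr_deriv (mul_one _))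
    have := (convex_uIcc y t).norm_image_sub_le_of_norm_hasDerivWithin_le hderiv
      (fun v hv => hK v hv) hys hu
    rw [Real.norm_eq_abs, Real.norm_eq_abs] at this
    convert this using 2
    ring
  have hderiv : ∀ u ∈ s, HasDerivWithinAt (fun w => F w - f y * w - f' y / 2 * (w - y) ^ 2)
      (f u - f y - f' y * (u - y)) s u := by
    intro u hu
    have hq := (((hasDerivWithinAt_id u s).sub_const y).pow 2).const_mul (f' y / 2)
    exact (((hF u hu).sub ((hasDerivWithinAt_id u s).const_mul (f y))).sub hq).congr_deriv
      (by simp only [id_eq]; ring)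
  have := (convex_uIcc y t).norm_image_sub_le_of_norm_hasDerivWithin_le hderiv
    (fun u hu => (hlin u hu).trans (mul_le_mul_of_nonneg_left (abs_sub_left_of_mem_uIcc hu) hK0))
    hys right_mem_uIcc
  rw [Real.norm_eq_abs, Real.norm_eq_abs, mul_assoc, ← abs_mul, ← sq, abs_sq] at this
  convert this using 2
  ring

/-- Uniform continuity of `f'` controls the remainder near the diagonal; away from it the
crude bound `2 M (t - y)²` is absorbed into `C (t - y)⁴`. -/
lemma exists_abs_taylor_two_le {F f f' : ℝ → ℝ}
    (hf : ∀ t ∈ Icc (0 : ℝ) 1, HasDerivWithinAt F (f t) (Icc (0 : ℝ) 1) t)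
    (hf' : ∀ t ∈ Icc (0 : ℝ) 1, HasDerivWithinAt f (f' t) (Icc (0 : ℝ) 1) t)
    (hf'c : ContinuousOn f' (Icc (0 : ℝ) 1)) {ε : ℝ} (hε : 0 < ε) :
    ∃ C, 0 ≤ C ∧ ∀ y ∈ Icc (0 : ℝ) 1, ∀ t ∈ Icc (0 : ℝ) 1,
      |F t - F y - f y * (t - y) - f' y / 2 * (t - y) ^ 2|
        ≤ ε * (t - y) ^ 2 + C * (t - y) ^ 4 := by
  obtain ⟨M, hM⟩ := isCompact_Icc.exists_bound_of_continuousOn hf'c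
  simp only [Real.norm_eq_abs] at hM
  obtain ⟨δ, hδ, hclose⟩ :=
    Metric.uniformContinuousOn_iff.mp (isCompact_Icc.uniformContinuousOn_of_continuous hf'c) ε hε
  have hM0 : 0 ≤ M := (abs_nonneg _).trans (hM 0 (left_mem_Icc.mpr zero_le_one))
  refine ⟨2 * M / δ ^ 2, by positivity, fun y hy t ht => ?_⟩
  have hsub : uIcc y t ⊆ Icc 0 1 := uIcc_subset_Icc hy ht
  have taylor := fun K => abs_taylor_two_le (F := F) (f := f) (f' := f') (K := K)
    (fun u hu => (hf u (hsub hu)).mono hsub) (fun u hu => (hf' u (hsub hu)).mono hsub)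
  have hquad : 0 ≤ ε * (t - y) ^ 2 := by positivity
  have hquartic : 0 ≤ 2 * M / δ ^ 2 * (t - y) ^ 4 := by positivity
  rcases lt_or_ge |t - y| δ with hnear | hfar
  · have h := taylor ε fun u hu =>
      (hclose u (hsub hu) y hy ((abs_sub_left_of_mem_uIcc hu).trans_lt hnear)).le
    linarith
  · have h := taylor (2 * M) fun u hu =>
      (abs_sub _ _).trans (by linarith [hM u (hsub hu), hM y hy])
    have hδt : δ ^ 2 ≤ (t - y) ^ 2 := by
      simpa only [sq_abs] using pow_le_pow_left₀ hδ.le hfar 2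
    have hfar' : 2 * M * (t - y) ^ 2 ≤ 2 * M / δ ^ 2 * (t - y) ^ 4 := by
      rw [div_mul_eq_mul_div, le_div_iff₀ (by positivity)]
      nlinarith [mul_le_mul_of_nonneg_left hδt (by positivity : 0 ≤ 2 * M * (t - y) ^ 2)]
    linarith

lemma eventually_abs_bsmooth_sub_le {F f f' : ℝ → ℝ}
    (hf : ∀ t ∈ Icc (0 : ℝ) 1, HasDerivWithinAt F (f t) (Icc (0 : ℝ) 1) t)
    (hf' : ∀ t ∈ Icc (0 : ℝ) 1, HasDerivWithinAt f (f' t) (Icc (0 : ℝ) 1) t)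
    (hf'c : ContinuousOn f' (Icc (0 : ℝ) 1)) {ε : ℝ} (hε : 0 < ε) :
    ∀ᶠ m : ℕ in atTop, ∀ y ∈ Icc (0 : ℝ) 1,
      |bsmooth m F y - F y - y * (1 - y) / (2 * (m : ℝ)) * f' y| ≤ ε * (m : ℝ)⁻¹ := by
  obtain ⟨C, hC0, hC⟩ := exists_abs_taylor_two_le hf hf' hf'c (half_pos hε)
  filter_upwards [eventually_ne_atTop 0,
    tendsto_natCast_atTop_atTop.eventually_ge_atTop (2 * C / ε)] with m hm hmC y hy
  have hsplit : bsmooth m F y - F y - y * (1 - y) / (2 * (m : ℝ)) * f' y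
      = bsmooth m (fun t => F t - F y - f y * (t - y) - f' y / 2 * (t - y) ^ 2) y := by
    have hdecomp : bsmooth m F y = bsmooth m (fun t => (F y + f y * (t - y) + f' y / 2 * (t - y) ^ 2)
        + (F t - F y - f y * (t - y) - f' y / 2 * (t - y) ^ 2)) y := by
      congr 1; funext t; ring
    rw [hdecomp, bsmooth_add, bsmooth_quadratic hm]
    ring
  have hrem := abs_bsmooth_le (m := m) hy (hC y hy)
  rw [bsmooth_add, bsmooth_const_mul, bsmooth_const_mul, bsmooth_sub_sq hm] at hrem
  have hy1 : y * (1 - y) ≤ 1 := by nlinarith [hy.1, hy.2]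
  have hCm : C * (1 / (m : ℝ) ^ 2) ≤ ε / 2 * (1 / m) := by
    rw [div_le_iff₀ hε] at hmC
    field_simp
    nlinarith
  rw [hsplit]
  calc _ ≤ ε / 2 * (y * (1 - y) / m) + C * bsmooth m (fun t => (t - y) ^ 4) y := hrem
    _ ≤ ε / 2 * (1 / m) + C * (1 / (m : ℝ) ^ 2) := by
      gcongr
      exact bsmooth_sub_pow_four_le hm hy
    _ ≤ ε * (m : ℝ)⁻¹ := by
      rw [inv_eq_one_div]
      linarith

lemma exists_forall_abs_le_isLittleO {ι α : Type*} {l : Filter ι} {S : Set α}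
    {E : ι → α → ℝ} {g : ι → ℝ} (hg : ∀ i, 0 ≤ g i)
    (hbdd : ∀ i, BddAbove ((fun y => |E i y|) '' S))
    (hE : ∀ ε > 0, ∀ᶠ i in l, ∀ y ∈ S, |E i y| ≤ ε * g i) :
    ∃ r : ι → ℝ, (∀ i, ∀ y ∈ S, |E i y| ≤ r i) ∧ r =o[l] g := by
  refine ⟨fun i => sSup ((fun y => |E i y|) '' S),
    fun i y hy => le_csSup (hbdd i) (mem_image_of_mem _ hy), isLittleO_iff.mpr fun ε hε => ?_⟩
  filter_upwards [hE ε hε] with i hi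
  have hsup_nonneg : 0 ≤ sSup ((fun y => |E i y|) '' S) :=
    Real.sSup_nonneg (forall_mem_image.mpr fun _ _ => abs_nonneg _)
  rw [Real.norm_of_nonneg hsup_nonneg, Real.norm_of_nonneg (hg i)]
  exact Real.sSup_le (forall_mem_image.mpr hi) (mul_nonneg hε.le (hg i))

/-- If `F` is twice continuously differentiable on `[0,1]` with `f = F'`,
then uniformly for `y ∈ [0,1]`, as `m → ∞`,
`𝓑_m(F)(y) = F(y) + (y(1−y)/(2m)) f'(y) + o(m⁻¹)`. -/
theorem bernstein_polynomial_uniform_expansion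
    (F f f' : ℝ → ℝ)
    (hf : ∀ t ∈ Set.Icc (0 : ℝ) 1, HasDerivWithinAt F (f t) (Set.Icc (0 : ℝ) 1) t)
    (hf' : ∀ t ∈ Set.Icc (0 : ℝ) 1, HasDerivWithinAt f (f' t) (Set.Icc (0 : ℝ) 1) t)
    (hf'c : ContinuousOn f' (Set.Icc (0 : ℝ) 1)) :
    ∃ r : ℕ → ℝ,
      (∀ m : ℕ, ∀ y ∈ Set.Icc (0 : ℝ) 1,
        |bsmooth m F y - F y - y * (1 - y) / (2 * (m : ℝ)) * f' y| ≤ r m) ∧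
      r =o[atTop] fun m : ℕ => ((m : ℝ))⁻¹ := by
  have hFc : ContinuousOn F (Icc 0 1) := fun t ht => (hf t ht).continuousWithinAt
  refine exists_forall_abs_le_isLittleO (fun m => inv_nonneg.mpr m.cast_nonneg) (fun m => ?_)
    fun ε hε => eventually_abs_bsmooth_sub_le hf hf' hf'c hε
  refine (isCompact_Icc.image_of_continuousOn (ContinuousOn.abs ?_)).bddAbove
  exact ((continuous_bsmooth m F).continuousOn.sub hFc).sub
    ((by fun_prop : Continuous fun y : ℝ => y * (1 - y) / (2 * (m : ℝ))).continuousOn.mul hf'c)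
end
end

section
/- Under the MAR setup, for every y ∈ [0,1] and m ∈ ℕ, the variance of the Bernstein-smoothed IPW pseudo estimator admits the exact representation Var(F̃_{n,m}(y)) = n⁻¹ { Σ_{k=0}^m Σ_{ℓ=0}^m E[ F_{Y₁|X₁}((k∧ℓ)/m) / π(X₁) ] b_{m,k}(y) b_{m,ℓ}(y) − (𝓑_m(F)(y))² }, where k∧ℓ = min(k,ℓ) and F_{Y₁|X₁}(t) = P(Y₁ ≤ t | X₁). -/
open MeasureTheory ProbabilityTheory Filter Asymptotics

noncomputable section

/-- Indicator `𝟙{t ≤ y}` as a real number. -/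
def ind (t y : ℝ) : ℝ := if t ≤ y then 1 else 0

/-- The IPW pseudo-empirical CDF
`F̃_n(y) = n⁻¹ ∑_{i<n} (δ_i / π(X_i)) 𝟙{Y_i ≤ y}` (known propensities). -/
def tildeF {Ω α : Type*} (Y : ℕ → Ω → ℝ) (X : ℕ → Ω → α) (δ : ℕ → Ω → ℝ) (π : α → ℝ)
    (n : ℕ) (y : ℝ) (ω : Ω) : ℝ :=
  (n : ℝ)⁻¹ * ∑ i ∈ Finset.range n, δ i ω / π (X i ω) * ind (Y i ω) y

/-- The Bernstein-smoothed IPW pseudo estimator `F̃_{n,m}(y) = 𝓑_m(F̃_n)(y)`. -/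
def tildeFnm {Ω α : Type*} (Y : ℕ → Ω → ℝ) (X : ℕ → Ω → α) (δ : ℕ → Ω → ℝ) (π : α → ℝ)
    (n m : ℕ) (y : ℝ) (ω : Ω) : ℝ :=
  bsmooth m (fun t => tildeF Y X δ π n t ω) y

/-!
Write `F̃_{n,m}(y) = n⁻¹ ∑ᵢ Wᵢ` with `Wᵢ = δᵢ / π(Xᵢ) · 𝓑_m(𝟙{Yᵢ ≤ ·})(y)`, a fixed bounded function
of the i.i.d. triple `(Yᵢ, Xᵢ, δᵢ)`; hence `Var F̃_{n,m}(y) = n⁻¹ Var W₀`. Both moments of `W₀` are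
sums of terms `E[h(X) δ 𝟙{Y ≤ t}]` with `h = 1/π` or `h = 1/π²` (using `δ² = δ` and
`𝟙{Y ≤ s} 𝟙{Y ≤ t} = 𝟙{Y ≤ s ∧ t}`). Conditioning on `X` and using MAR,
`E[δ 𝟙{Y ≤ t} | X] = π(X) F_{Y|X}(t)`, so the first weight gives `E W₀ = 𝓑_m(F)(y)` and the
second gives the double sum of `E[F_{Y|X}((k ∧ l)/m) / π(X)]`.
-/

open Finset
open scoped ENNReal

lemma abs_inv_le_inv_of_le {a b : ℝ} (ha : 0 < a) (hab : a ≤ b) : |b⁻¹| ≤ a⁻¹ := by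
  rw [abs_inv, abs_of_pos (ha.trans_le hab)]
  exact inv_anti₀ ha hab

lemma ind_comp_eq_indicator {Ω : Type*} (Y : Ω → ℝ) (t : ℝ) :
    (fun ω => ind (Y ω) t) = (Y ⁻¹' Set.Iic t).indicator fun _ => 1 := by
  funext ω
  by_cases hy : Y ω ≤ t <;> simp [ind, hy]

lemma abs_ind_le_one (t y : ℝ) : |ind t y| ≤ 1 := by
  unfold ind; split_ifs <;> norm_num

lemma ind_mul_ind (t a b : ℝ) : ind t a * ind t b = ind t (min a b) := by
  by_cases ha : t ≤ a <;> by_cases hb : t ≤ b <;> simp [ind, ha, hb]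

lemma measurable_ind (y : ℝ) : Measurable fun t => ind t y :=
  Measurable.ite measurableSet_Iic measurable_const measurable_const

lemma measurable_bsmooth_ind (m : ℕ) (y : ℝ) : Measurable fun t => bsmooth m (ind t) y :=
  Finset.measurable_sum _ fun _ _ => (measurable_ind _).mul_const _

lemma abs_bsmooth_ind_le (m : ℕ) (t y : ℝ) :
    |bsmooth m (ind t) y| ≤ ∑ k ∈ range (m + 1), |bern m k y| :=
  (abs_sum_le_sum_abs _ _).trans <| sum_le_sum fun _ _ => by
    rw [abs_mul]
    exact mul_le_of_le_one_left (abs_nonneg _) (abs_ind_le_one _ _)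

lemma bsmooth_ind_sq (m : ℕ) (t y : ℝ) :
    bsmooth m (ind t) y ^ 2 = ∑ k ∈ range (m + 1), ∑ l ∈ range (m + 1),
      ind t (((min k l : ℕ) : ℝ) / m) * bern m k y * bern m l y := by
  rw [sq, bsmooth, sum_mul_sum]
  refine sum_congr rfl fun k _ => sum_congr rfl fun l _ => ?_
  rw [Nat.cast_min, ← min_div_div_right (Nat.cast_nonneg m), ← ind_mul_ind]
  ring

def ipwBernsteinSummand {α : Type*} (π : α → ℝ) (m : ℕ) (y : ℝ) (p : ℝ × α × ℝ) : ℝ :=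
  p.2.2 / π p.2.1 * bsmooth m (ind p.1) y

lemma tildeFnm_eq_mean {Ω α : Type*} (Y : ℕ → Ω → ℝ) (X : ℕ → Ω → α) (δ : ℕ → Ω → ℝ)
    (π : α → ℝ) (n m : ℕ) (y : ℝ) :
    tildeFnm Y X δ π n m y =
      fun ω => (n : ℝ)⁻¹ * ∑ i ∈ range n, ipwBernsteinSummand π m y (Y i ω, X i ω, δ i ω) := by
  funext ω
  simp only [tildeFnm, bsmooth, tildeF, ipwBernsteinSummand, sum_mul, mul_sum]
  rw [sum_comm]
  exact sum_congr rfl fun i _ => sum_congr rfl fun k _ => by ring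

lemma ipwBernsteinSummand_eq_sum {α : Type*} (π : α → ℝ) (m : ℕ) (y : ℝ) (p : ℝ × α × ℝ) :
    ipwBernsteinSummand π m y p =
      ∑ k ∈ range (m + 1), (π p.2.1)⁻¹ * (p.2.2 * ind p.1 ((k : ℝ) / m)) * bern m k y := by
  rw [ipwBernsteinSummand, bsmooth, mul_sum]
  exact sum_congr rfl fun k _ => by ring

lemma ipwBernsteinSummand_sq_eq_sum {α : Type*} (π : α → ℝ) (m : ℕ) (y : ℝ) (p : ℝ × α × ℝ)
    (hp : p.2.2 = 0 ∨ p.2.2 = 1) :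
    ipwBernsteinSummand π m y p ^ 2 =
      ∑ k ∈ range (m + 1), ∑ l ∈ range (m + 1),
        (π p.2.1 ^ 2)⁻¹ * (p.2.2 * ind p.1 (((min k l : ℕ) : ℝ) / m)) *
          (bern m k y * bern m l y) := by
  have hidem : p.2.2 ^ 2 = p.2.2 := by rcases hp with h | h <;> simp [h]
  rw [ipwBernsteinSummand, mul_pow, div_pow, hidem, bsmooth_ind_sq, mul_sum]
  refine sum_congr rfl fun k _ => ?_
  rw [mul_sum]
  exact sum_congr rfl fun l _ => by ring

lemma measurable_ipwBernsteinSummand {α : Type*} [MeasurableSpace α]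
    [MeasurableSingletonClass α] [Countable α] (π : α → ℝ) (m : ℕ) (y : ℝ) :
    Measurable (ipwBernsteinSummand π m y) :=
  (measurable_snd.snd.div ((measurable_of_countable π).comp measurable_snd.fst)).mul
    ((measurable_bsmooth_ind m y).comp measurable_fst)

lemma memLp_ipwBernsteinSummand {Ω α : Type*} [MeasurableSpace Ω] [MeasurableSpace α]
    [MeasurableSingletonClass α] [Countable α] {μ : Measure Ω} [IsFiniteMeasure μ]
    {Y : Ω → ℝ} {X : Ω → α} {δ : Ω → ℝ} (hY : Measurable Y) (hX : Measurable X)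
    (hδ : Measurable δ) (hδ01 : ∀ ω, δ ω = 0 ∨ δ ω = 1) {π : α → ℝ} {πmin : ℝ}
    (hπmin : 0 < πmin) (hπ : ∀ x, πmin ≤ π x) (m : ℕ) (y : ℝ) (p : ℝ≥0∞) :
    MemLp (fun ω => ipwBernsteinSummand π m y (Y ω, X ω, δ ω)) p μ := by
  refine MemLp.of_bound ((measurable_ipwBernsteinSummand π m y).comp
    (hY.prodMk (hX.prodMk hδ))).aestronglyMeasurable
    (πmin⁻¹ * ∑ k ∈ range (m + 1), |bern m k y|) (ae_of_all _ fun ω => ?_)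
  have hweight : |δ ω / π (X ω)| ≤ πmin⁻¹ := by
    rcases hδ01 ω with h | h
    · simp [h, hπmin.le]
    · simpa [h, one_div] using abs_inv_le_inv_of_le hπmin (hπ (X ω))
  rw [Real.norm_eq_abs, ipwBernsteinSummand, abs_mul]
  exact mul_le_mul hweight (abs_bsmooth_ind_le m _ y) (abs_nonneg _) (inv_nonneg.2 hπmin.le)

lemma variance_mean_of_iIndepFun {Ω β : Type*} [MeasurableSpace Ω] [MeasurableSpace β]
    {μ : Measure Ω} [IsFiniteMeasure μ] {Z : ℕ → Ω → β} (hindep : iIndepFun Z μ)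
    (hident : ∀ i, IdentDistrib (Z i) (Z 0) μ μ) {g : β → ℝ} (hg : Measurable g)
    (hg2 : MemLp (fun ω => g (Z 0 ω)) 2 μ) (n : ℕ) :
    variance (fun ω => (n : ℝ)⁻¹ * ∑ i ∈ range n, g (Z i ω)) μ
      = (n : ℝ)⁻¹ * variance (fun ω => g (Z 0 ω)) μ := by
  have hmem : ∀ i, MemLp (g ∘ Z i) 2 μ := fun i => ((hident i).comp hg).symm.memLp_snd hg2
  have hvar : ∀ i, variance (g ∘ Z i) μ = variance (fun ω => g (Z 0 ω)) μ :=
    fun i => ((hident i).comp hg).variance_eq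
  have hsum : variance (∑ i ∈ range n, g ∘ Z i) μ = n * variance (fun ω => g (Z 0 ω)) μ := by
    rw [IndepFun.variance_sum (fun i _ => hmem i)
      fun i _ j _ hij => (hindep.indepFun hij).comp hg hg]
    simp [hvar]
  have hfun : (fun ω => ∑ i ∈ range n, g (Z i ω)) = ∑ i ∈ range n, g ∘ Z i := by
    ext; simp
  rw [variance_const_mul, hfun, hsum]
  obtain rfl | hn := eq_or_ne n 0
  · simp
  · rw [sq, mul_assoc, inv_mul_cancel_left₀ (Nat.cast_ne_zero.2 hn)]

lemma integral_mul_eq_integral_mul_condExp {Ω : Type*} {m m₀ : MeasurableSpace Ω}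
    {μ : Measure[m₀] Ω} [IsFiniteMeasure μ] (hm : m ≤ m₀) {f g : Ω → ℝ}
    (hf : StronglyMeasurable[m] f) {C : ℝ} (hfC : ∀ ω, |f ω| ≤ C) (hg : Integrable g μ) :
    ∫ ω, f ω * g ω ∂μ = ∫ ω, f ω * μ[g | m] ω ∂μ := by
  have hfg : Integrable (f * g) μ :=
    hg.bdd_mul (hf.mono hm).aestronglyMeasurable (ae_of_all _ hfC)
  calc ∫ ω, f ω * g ω ∂μ = ∫ ω, μ[f * g | m] ω ∂μ := (integral_condExp hm).symm
    _ = ∫ ω, f ω * μ[g | m] ω ∂μ :=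
      integral_congr_ae (condExp_mul_of_stronglyMeasurable_left hf hfg hg)

lemma condExp_mul_ind_of_condIndepFun {Ω : Type*} {m mΩ : MeasurableSpace Ω}
    [StandardBorelSpace Ω] {μ : Measure Ω} [IsFiniteMeasure μ] (hm : m ≤ mΩ) {δ Y : Ω → ℝ}
    (hδ : Measurable δ) (hY : Measurable Y) (hδ01 : ∀ ω, δ ω = 0 ∨ δ ω = 1)
    (hindep : CondIndepFun m hm δ Y μ) (t : ℝ) :
    μ[fun ω => δ ω * ind (Y ω) t | m] =ᵐ[μ] μ[δ | m] * μ[fun ω => ind (Y ω) t | m] := by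
  have hδ_eq : ((δ ⁻¹' {1}).indicator fun _ => 1) = δ := by
    funext ω; rcases hδ01 ω with h | h <;> simp [h]
  have hprod : ((δ ⁻¹' {1} ∩ Y ⁻¹' Set.Iic t).indicator fun _ => 1) =
      fun ω => δ ω * ind (Y ω) t := by
    funext ω
    rcases hδ01 ω with h | h <;> by_cases hy : Y ω ≤ t <;> simp [ind, h, hy]
  have hfac := (condIndepFun_iff_condExp_inter_preimage_eq_mul hδ hY).mp hindep _ _
    (measurableSet_singleton 1) (measurableSet_Iic (a := t))
  rwa [hprod, hδ_eq, ← ind_comp_eq_indicator] at hfac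

lemma integrable_mul_ind {Ω : Type*} [MeasurableSpace Ω] {μ : Measure Ω} [IsFiniteMeasure μ]
    {δ Y : Ω → ℝ} (hδ : Measurable δ) (hY : Measurable Y) (hδ01 : ∀ ω, δ ω = 0 ∨ δ ω = 1)
    (t : ℝ) : Integrable (fun ω => δ ω * ind (Y ω) t) μ :=
  Integrable.of_bound (hδ.mul ((measurable_ind t).comp hY)).aestronglyMeasurable 1
    (ae_of_all _ fun ω => by rcases hδ01 ω with h | h <;> simp [h, abs_ind_le_one])

lemma integrable_comp_mul_mul_ind {Ω α : Type*} [MeasurableSpace Ω] [MeasurableSpace α]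
    [MeasurableSingletonClass α] [Countable α] {μ : Measure Ω} [IsFiniteMeasure μ]
    {Y : Ω → ℝ} {X : Ω → α} {δ : Ω → ℝ} (hY : Measurable Y) (hX : Measurable X)
    (hδ : Measurable δ) (hδ01 : ∀ ω, δ ω = 0 ∨ δ ω = 1) {h : α → ℝ} {C : ℝ}
    (hh : ∀ x, |h x| ≤ C) (t : ℝ) :
    Integrable (fun ω => h (X ω) * (δ ω * ind (Y ω) t)) μ :=
  (integrable_mul_ind hδ hY hδ01 t).bdd_mul
    ((measurable_of_countable h).comp hX).aestronglyMeasurable (ae_of_all _ fun ω => hh (X ω))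

lemma integral_comp_mul_mul_ind_eq_of_condIndepFun {Ω α : Type*} [MeasurableSpace Ω]
    [StandardBorelSpace Ω] [MeasurableSpace α] [MeasurableSingletonClass α] [Countable α]
    {μ : Measure Ω} [IsFiniteMeasure μ] {Y : Ω → ℝ} {X : Ω → α} {δ : Ω → ℝ}
    (hY : Measurable Y) (hX : Measurable X) (hδ : Measurable δ)
    (hδ01 : ∀ ω, δ ω = 0 ∨ δ ω = 1) {π : α → ℝ}
    (hprop : μ[δ | MeasurableSpace.comap X inferInstance] =ᵐ[μ] fun ω => π (X ω))
    (hMAR : CondIndepFun (MeasurableSpace.comap X inferInstance) hX.comap_le δ Y μ)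
    {Fc : α → ℝ → ℝ} {t : ℝ}
    (hFc : μ[fun ω => ind (Y ω) t | MeasurableSpace.comap X inferInstance]
      =ᵐ[μ] fun ω => Fc (X ω) t)
    {h : α → ℝ} {C : ℝ} (hh : ∀ x, |h x| ≤ C) :
    ∫ ω, h (X ω) * (δ ω * ind (Y ω) t) ∂μ = ∫ ω, h (X ω) * (π (X ω) * Fc (X ω) t) ∂μ := by
  rw [integral_mul_eq_integral_mul_condExp (f := fun ω => h (X ω)) hX.comap_le
    ((measurable_of_countable h).comp (comap_measurable X)).stronglyMeasurable
    (fun ω => hh (X ω)) (integrable_mul_ind hδ hY hδ01 t)]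
  refine integral_congr_ae ?_
  filter_upwards [condExp_mul_ind_of_condIndepFun hX.comap_le hδ hY hδ01 hMAR t, hprop, hFc]
    with ω hfac hδω hYω
  rw [hfac, Pi.mul_apply, hδω, hYω]

section Moments

variable {Ω α : Type*} [MeasurableSpace Ω] [StandardBorelSpace Ω] [MeasurableSpace α]
  [MeasurableSingletonClass α] [Countable α] {μ : Measure Ω} [IsFiniteMeasure μ]
  {Y : Ω → ℝ} {X : Ω → α} {δ : Ω → ℝ} {π : α → ℝ} {πmin : ℝ} {Fc : α → ℝ → ℝ}

lemma integral_inv_mul_mul_ind (hY : Measurable Y) (hX : Measurable X) (hδ : Measurable δ)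
    (hδ01 : ∀ ω, δ ω = 0 ∨ δ ω = 1) (hπmin : 0 < πmin) (hπ : ∀ x, πmin ≤ π x)
    (hprop : μ[δ | MeasurableSpace.comap X inferInstance] =ᵐ[μ] fun ω => π (X ω))
    (hMAR : CondIndepFun (MeasurableSpace.comap X inferInstance) hX.comap_le δ Y μ) {t : ℝ}
    (hFc : μ[fun ω => ind (Y ω) t | MeasurableSpace.comap X inferInstance]
      =ᵐ[μ] fun ω => Fc (X ω) t) :
    ∫ ω, (π (X ω))⁻¹ * (δ ω * ind (Y ω) t) ∂μ = (μ {ω | Y ω ≤ t}).toReal := by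
  rw [integral_comp_mul_mul_ind_eq_of_condIndepFun hY hX hδ hδ01 hprop hMAR hFc
    fun x => abs_inv_le_inv_of_le hπmin (hπ x)]
  have hcancel : ∀ ω, (π (X ω))⁻¹ * (π (X ω) * Fc (X ω) t) = Fc (X ω) t := fun ω =>
    inv_mul_cancel_left₀ (hπmin.trans_le (hπ _)).ne' _
  simp_rw [hcancel]
  rw [← integral_congr_ae hFc, integral_condExp hX.comap_le, ind_comp_eq_indicator,
    integral_indicator_const _ (measurableSet_Iic.preimage hY), smul_eq_mul, mul_one]
  rfl

lemma integral_inv_sq_mul_mul_ind (hY : Measurable Y) (hX : Measurable X) (hδ : Measurable δ)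
    (hδ01 : ∀ ω, δ ω = 0 ∨ δ ω = 1) (hπmin : 0 < πmin) (hπ : ∀ x, πmin ≤ π x)
    (hprop : μ[δ | MeasurableSpace.comap X inferInstance] =ᵐ[μ] fun ω => π (X ω))
    (hMAR : CondIndepFun (MeasurableSpace.comap X inferInstance) hX.comap_le δ Y μ) {t : ℝ}
    (hFc : μ[fun ω => ind (Y ω) t | MeasurableSpace.comap X inferInstance]
      =ᵐ[μ] fun ω => Fc (X ω) t) :
    ∫ ω, (π (X ω) ^ 2)⁻¹ * (δ ω * ind (Y ω) t) ∂μ = ∫ ω, Fc (X ω) t / π (X ω) ∂μ := by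
  rw [integral_comp_mul_mul_ind_eq_of_condIndepFun hY hX hδ hδ01 hprop hMAR hFc
    fun x => abs_inv_le_inv_of_le (pow_pos hπmin 2) (pow_le_pow_left₀ hπmin.le (hπ x) 2)]
  refine integral_congr_ae (ae_of_all _ fun ω => ?_)
  have hne : π (X ω) ≠ 0 := (hπmin.trans_le (hπ _)).ne'
  field_simp

lemma integral_ipwBernsteinSummand (hY : Measurable Y) (hX : Measurable X)
    (hδ : Measurable δ) (hδ01 : ∀ ω, δ ω = 0 ∨ δ ω = 1) (hπmin : 0 < πmin)
    (hπ : ∀ x, πmin ≤ π x)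
    (hprop : μ[δ | MeasurableSpace.comap X inferInstance] =ᵐ[μ] fun ω => π (X ω))
    (hMAR : CondIndepFun (MeasurableSpace.comap X inferInstance) hX.comap_le δ Y μ)
    (hFc : ∀ t, μ[fun ω => ind (Y ω) t | MeasurableSpace.comap X inferInstance]
      =ᵐ[μ] fun ω => Fc (X ω) t) (m : ℕ) (y : ℝ) :
    ∫ ω, ipwBernsteinSummand π m y (Y ω, X ω, δ ω) ∂μ
      = bsmooth m (fun t => (μ {ω | Y ω ≤ t}).toReal) y := by
  simp_rw [ipwBernsteinSummand_eq_sum]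
  rw [integral_finsetSum _ fun k _ => (integrable_comp_mul_mul_ind hY hX hδ hδ01
    (fun x => abs_inv_le_inv_of_le hπmin (hπ x)) _).mul_const _]
  refine sum_congr rfl fun k _ => ?_
  rw [integral_mul_const, integral_inv_mul_mul_ind hY hX hδ hδ01 hπmin hπ hprop hMAR (hFc _)]

lemma integral_ipwBernsteinSummand_sq (hY : Measurable Y) (hX : Measurable X)
    (hδ : Measurable δ) (hδ01 : ∀ ω, δ ω = 0 ∨ δ ω = 1) (hπmin : 0 < πmin)
    (hπ : ∀ x, πmin ≤ π x)
    (hprop : μ[δ | MeasurableSpace.comap X inferInstance] =ᵐ[μ] fun ω => π (X ω))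
    (hMAR : CondIndepFun (MeasurableSpace.comap X inferInstance) hX.comap_le δ Y μ)
    (hFc : ∀ t, μ[fun ω => ind (Y ω) t | MeasurableSpace.comap X inferInstance]
      =ᵐ[μ] fun ω => Fc (X ω) t) (m : ℕ) (y : ℝ) :
    ∫ ω, ipwBernsteinSummand π m y (Y ω, X ω, δ ω) ^ 2 ∂μ
      = ∑ k ∈ range (m + 1), ∑ l ∈ range (m + 1),
          (∫ ω, Fc (X ω) (((min k l : ℕ) : ℝ) / m) / π (X ω) ∂μ) * bern m k y * bern m l y := by
  have hbound : ∀ x, |(π x ^ 2)⁻¹| ≤ (πmin ^ 2)⁻¹ := fun x =>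
    abs_inv_le_inv_of_le (pow_pos hπmin 2) (pow_le_pow_left₀ hπmin.le (hπ x) 2)
  have hterm : ∀ s c, Integrable (fun ω => (π (X ω) ^ 2)⁻¹ * (δ ω * ind (Y ω) s) * c) μ :=
    fun s c => (integrable_comp_mul_mul_ind hY hX hδ hδ01 hbound s).mul_const c
  simp_rw [fun ω => ipwBernsteinSummand_sq_eq_sum π m y (Y ω, X ω, δ ω) (hδ01 ω)]
  rw [integral_finsetSum _ fun k _ => integrable_finsetSum _ fun l _ => hterm _ _]
  refine sum_congr rfl fun k _ => ?_
  rw [integral_finsetSum _ fun l _ => hterm _ _]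
  refine sum_congr rfl fun l _ => ?_
  rw [integral_mul_const, integral_inv_sq_mul_mul_ind hY hX hδ hδ01 hπmin hπ hprop hMAR (hFc _),
    mul_assoc]

end Moments

theorem variance_pseudo_exact_general
    {Ω : Type*} [MeasurableSpace Ω] [StandardBorelSpace Ω]
    {α : Type*} [MeasurableSpace α] [MeasurableSingletonClass α] [Countable α]
    (μ : Measure Ω) [IsProbabilityMeasure μ]
    (Y : ℕ → Ω → ℝ) (X : ℕ → Ω → α) (δ : ℕ → Ω → ℝ)
    (hYm : ∀ i, Measurable (Y i)) (hXm : ∀ i, Measurable (X i)) (hδm : ∀ i, Measurable (δ i))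
    (hδ01 : ∀ i ω, δ i ω = 0 ∨ δ i ω = 1)
    -- the triples (Y_i, X_i, δ_i) are i.i.d.
    (hiid : ∀ i j, IdentDistrib (fun ω => (Y i ω, X i ω, δ i ω))
      (fun ω => (Y j ω, X j ω, δ j ω)) μ μ)
    (hindep : iIndepFun (fun i ω => (Y i ω, X i ω, δ i ω)) μ)
    -- Assumption (A1): the propensity score is bounded below by πmin > 0
    (π : α → ℝ) (πmin : ℝ) (hπmin : 0 < πmin) (hπ : ∀ x, πmin ≤ π x)
    -- π(X_i) = P(δ_i = 1 | X_i)
    (hprop : ∀ i, μ[δ i | MeasurableSpace.comap (X i) inferInstance]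
      =ᵐ[μ] fun ω => π (X i ω))
    -- MAR: δ_i is independent of Y_i conditionally on X_i
    (hMAR : ∀ i, CondIndepFun (MeasurableSpace.comap (X i) inferInstance)
      ((hXm i).comap_le) (δ i) (Y i) μ)
    -- F is the CDF of the Y_i
    (F : ℝ → ℝ) (hF : ∀ t, F t = (μ {ω | Y 0 ω ≤ t}).toReal)
    -- F_{Y₁|X₁}: the conditional CDF of Y_i given X_i
    (Fc : α → ℝ → ℝ)
    (hFc : ∀ i t, μ[fun ω => ind (Y i ω) t | MeasurableSpace.comap (X i) inferInstance]
      =ᵐ[μ] fun ω => Fc (X i ω) t)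
    (n : ℕ) (m : ℕ) (y : ℝ) :
    variance (tildeFnm Y X δ π n m y) μ
      = (n : ℝ)⁻¹ *
          ((∑ k ∈ Finset.range (m + 1), ∑ l ∈ Finset.range (m + 1),
              (∫ ω, Fc (X 0 ω) (((min k l : ℕ) : ℝ) / (m : ℝ)) / π (X 0 ω) ∂μ)
                * bern m k y * bern m l y)
            - (bsmooth m F y) ^ 2) := by
  obtain rfl : F = fun t => (μ {ω | Y 0 ω ≤ t}).toReal := funext hF
  have hL2 := memLp_ipwBernsteinSummand (μ := μ) (hYm 0) (hXm 0) (hδm 0) (hδ01 0) hπmin hπ m y 2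
  rw [tildeFnm_eq_mean, variance_mean_of_iIndepFun hindep (fun i => hiid i 0)
    (measurable_ipwBernsteinSummand π m y) hL2 n, variance_eq_sub hL2]
  simp only [Pi.pow_apply]
  rw [integral_ipwBernsteinSummand_sq (hYm 0) (hXm 0) (hδm 0) (hδ01 0) hπmin hπ (hprop 0)
      (hMAR 0) (hFc 0) m y,
    integral_ipwBernsteinSummand (hYm 0) (hXm 0) (hδm 0) (hδ01 0) hπmin hπ (hprop 0)
      (hMAR 0) (hFc 0) m y]

/-- Exact variance representation for the Bernstein-smoothed IPW pseudo
estimator: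
`Var(F̃_{n,m}(y)) = n⁻¹ { ∑_{k,ℓ} E[F_{Y₁|X₁}((k∧ℓ)/m)/π(X₁)] b_{m,k}(y) b_{m,ℓ}(y) − 𝓑_m(F)(y)² }`. -/
theorem variance_pseudo_exact
    {Ω : Type*} [MeasurableSpace Ω] [StandardBorelSpace Ω]
    {α : Type*} [MeasurableSpace α] [MeasurableSingletonClass α] [Countable α]
    (μ : Measure Ω) [IsProbabilityMeasure μ]
    (Y : ℕ → Ω → ℝ) (X : ℕ → Ω → α) (δ : ℕ → Ω → ℝ)
    (hYm : ∀ i, Measurable (Y i)) (hXm : ∀ i, Measurable (X i)) (hδm : ∀ i, Measurable (δ i))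
    (hY01 : ∀ i ω, Y i ω ∈ Set.Icc (0 : ℝ) 1)
    (hδ01 : ∀ i ω, δ i ω = 0 ∨ δ i ω = 1)
    -- the triples (Y_i, X_i, δ_i) are i.i.d.
    (hiid : ∀ i j, IdentDistrib (fun ω => (Y i ω, X i ω, δ i ω))
      (fun ω => (Y j ω, X j ω, δ j ω)) μ μ)
    (hindep : iIndepFun (fun i ω => (Y i ω, X i ω, δ i ω)) μ)
    -- Assumption (A1): the propensity score is bounded below by πmin > 0
    (π : α → ℝ) (πmin : ℝ) (hπmin : 0 < πmin) (hπ : ∀ x, πmin ≤ π x)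
    -- π(X_i) = P(δ_i = 1 | X_i)
    (hprop : ∀ i, μ[δ i | MeasurableSpace.comap (X i) inferInstance]
      =ᵐ[μ] fun ω => π (X i ω))
    -- MAR: δ_i is independent of Y_i conditionally on X_i
    (hMAR : ∀ i, CondIndepFun (MeasurableSpace.comap (X i) inferInstance)
      ((hXm i).comap_le) (δ i) (Y i) μ)
    -- F is the CDF of the Y_i
    (F : ℝ → ℝ) (hF : ∀ t, F t = (μ {ω | Y 0 ω ≤ t}).toReal)
    -- F_{Y₁|X₁}: the conditional CDF of Y_i given X_i
    (Fc : α → ℝ → ℝ)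
    (hFc : ∀ i t, μ[fun ω => ind (Y i ω) t | MeasurableSpace.comap (X i) inferInstance]
      =ᵐ[μ] fun ω => Fc (X i ω) t)
    (n : ℕ) (hn : 0 < n) (m : ℕ) (y : ℝ) (hy : y ∈ Set.Icc (0 : ℝ) 1) :
    variance (tildeFnm Y X δ π n m y) μ
      = (n : ℝ)⁻¹ *
          ((∑ k ∈ Finset.range (m + 1), ∑ l ∈ Finset.range (m + 1),
              (∫ ω, Fc (X 0 ω) (((min k l : ℕ) : ℝ) / (m : ℝ)) / π (X 0 ω) ∂μ)
                * bern m k y * bern m l y)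
            - (bsmooth m F y) ^ 2) :=
  variance_pseudo_exact_general μ Y X δ hYm hXm hδm hδ01 hiid hindep π πmin hπmin hπ hprop hMAR F hF
    Fc hFc n m y
end
end

section
/- Under Assumptions A1 and A2, the nonparametric propensity-score estimator is uniformly n⁻¹-accurate in L²: for each i ∈ {1,…,n}, E[(π̂_i(X_{1:n}) − π(X_i))²] = O(n⁻¹) as n → ∞, where the implicit constant may depend on π_min and p_min but not on i. -/
/-!
Fix a level `x` with `pₓ = P(X = x)` and let `Nₓ = #{j < n | Xⱼ = x}`. Since `Xᵢ = x` forces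
`Nₓ ≥ 1`, `π̂ᵢ - π(x) = Tₓ / Nₓ` with `Tₓ = ∑ⱼ (δⱼ - π(x)) 𝟙{Xⱼ = x}`. When `Nₓ ≥ n pₓ / 2` this
is at most `2 |Tₓ| / (n pₓ)`; otherwise `|Nₓ - n pₓ| > n pₓ / 2` pays for the trivial bound `1`.
So `(π̂ᵢ - π(Xᵢ))² ≤ ∑ₓ 4 (Tₓ² + (Nₓ - n pₓ)²) / (n pₓ)²`. Both `Tₓ` and `Nₓ - n pₓ` are sums of
`n` independent, centred terms (the first because `E[δ 𝟙{X = x}] = π(x) pₓ`), each with second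
moment at most `pₓ`, so the expectation is at most `∑ₓ 8 / (n pₓ)`.
-/

open MeasureTheory ProbabilityTheory Filter Asymptotics

noncomputable section

/-- The nonparametric propensity-score estimator
`π̂_i(X_{1:n}) = (∑_j δ_j 𝟙{X_j = X_i}) / (∑_k 𝟙{X_k = X_i})`. -/
def piHat {Ω α : Type*} [DecidableEq α] (X : ℕ → Ω → α) (δ : ℕ → Ω → ℝ)
    (n i : ℕ) (ω : Ω) : ℝ :=
  (∑ j ∈ Finset.range n, δ j ω * (if X j ω = X i ω then 1 else 0)) /
    ∑ k ∈ Finset.range n, (if X k ω = X i ω then (1 : ℝ) else 0)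

/-- The feasible IPW empirical CDF `F̂_n(y) = n⁻¹ ∑_{i<n} (δ_i / π̂_i) 𝟙{Y_i ≤ y}`. -/
def hatF {Ω α : Type*} [DecidableEq α] (Y : ℕ → Ω → ℝ) (X : ℕ → Ω → α) (δ : ℕ → Ω → ℝ)
    (n : ℕ) (y : ℝ) (ω : Ω) : ℝ :=
  (n : ℝ)⁻¹ * ∑ i ∈ Finset.range n, δ i ω / piHat X δ n i ω * ind (Y i ω) y

/-- The Bernstein-smoothed feasible estimator `F̂_{n,m}(y) = 𝓑_m(F̂_n)(y)`. -/
def hatFnm {Ω α : Type*} [DecidableEq α] (Y : ℕ → Ω → ℝ) (X : ℕ → Ω → α) (δ : ℕ → Ω → ℝ)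
    (n m : ℕ) (y : ℝ) (ω : Ω) : ℝ :=
  bsmooth m (fun t => hatF Y X δ n t ω) y


open Finset Set

lemma sq_div_sub_le {S N t e : ℝ} (hS : 0 ≤ S) (hSN : S ≤ N) (hN : 0 < N)
    (ht : t ∈ Icc (0 : ℝ) 1) (he : 0 < e) :
    (S / N - t) ^ 2 ≤ 4 * ((S - t * N) ^ 2 + (N - e) ^ 2) / e ^ 2 := by
  rw [le_div_iff₀ (by positivity)]
  by_cases hNe : e / 2 ≤ N
  · have hquot : S / N - t = (S - t * N) / N := by field_simp
    have hNsq : e ^ 2 ≤ 4 * N ^ 2 := by nlinarith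
    calc (S / N - t) ^ 2 * e ^ 2 ≤ (S - t * N) ^ 2 / N ^ 2 * (4 * N ^ 2) := by
          rw [hquot, div_pow]; gcongr
      _ = 4 * (S - t * N) ^ 2 := by field_simp
      _ ≤ 4 * ((S - t * N) ^ 2 + (N - e) ^ 2) := by nlinarith [sq_nonneg (N - e)]
  · -- the count is far below `e`, so `(N - e)²` alone pays for the trivial bound `1`
    have hquot : S / N ∈ Icc (0 : ℝ) 1 := ⟨by positivity, (div_le_one hN).2 hSN⟩
    have hle_one : (S / N - t) ^ 2 ≤ 1 := by nlinarith [hquot.1, hquot.2, ht.1, ht.2]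
    nlinarith [sq_nonneg (S - t * N)]

lemma integral_sq_sum_le_of_indepFun {Ω ι : Type*} [MeasurableSpace Ω] {μ : Measure Ω}
    [IsProbabilityMeasure μ] {Z : ι → Ω → ℝ} {c : ℝ} (s : Finset ι)
    (hZ : ∀ j, MemLp (Z j) 2 μ) (hmean : ∀ j, ∫ ω, Z j ω ∂μ = 0)
    (hsq : ∀ j, ∫ ω, Z j ω ^ 2 ∂μ ≤ c) (hind : Pairwise fun j k => IndepFun (Z j) (Z k) μ) :
    ∫ ω, (∑ j ∈ s, Z j ω) ^ 2 ∂μ ≤ #s * c := by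
  have hvar_eq : ∀ j, variance (Z j) μ = ∫ ω, Z j ω ^ 2 ∂μ := fun j => by
    simp [variance_eq_sub (hZ j), hmean j]
  have hsum_mean : ∫ ω, ∑ j ∈ s, Z j ω ∂μ = 0 := by
    simp [integral_finsetSum s fun j _ => (hZ j).integrable one_le_two, hmean]
  calc ∫ ω, (∑ j ∈ s, Z j ω) ^ 2 ∂μ = variance (∑ j ∈ s, Z j) μ := by
        rw [variance_eq_sub (memLp_finsetSum' s fun j _ => hZ j)]
        simp [Finset.sum_apply, hsum_mean]
    _ = ∑ j ∈ s, variance (Z j) μ :=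
        IndepFun.variance_sum (fun j _ => hZ j) fun j _ k _ hjk => hind hjk
    _ ≤ ∑ _j ∈ s, c := sum_le_sum fun j _ => (hvar_eq j).trans_le (hsq j)
    _ = #s * c := by simp

section Counts

variable {Ω α : Type*} [DecidableEq α]

def indEq (X : Ω → α) (x : α) (ω : Ω) : ℝ := if X ω = x then 1 else 0

def countDeviation (X : ℕ → Ω → α) (δ : ℕ → Ω → ℝ) (g q : α → ℝ) (n : ℕ) (x : α) (ω : Ω) :
    ℝ :=
  4 * ((∑ j ∈ range n, (δ j ω - g x) * indEq (X j) x ω) ^ 2 +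
    (∑ j ∈ range n, (indEq (X j) x ω - q x)) ^ 2) / (n * q x) ^ 2

lemma indEq_mem_Icc (X : Ω → α) (x : α) (ω : Ω) : indEq X x ω ∈ Icc (0 : ℝ) 1 := by
  unfold indEq; split_ifs <;> simp

lemma mul_indEq_mem_Icc {d : ℝ} (hd : d ∈ Icc (0 : ℝ) 1) (X : Ω → α) (x : α) (ω : Ω) :
    d * indEq X x ω ∈ Icc (0 : ℝ) 1 :=
  ⟨mul_nonneg hd.1 (indEq_mem_Icc X x ω).1,
    mul_le_one₀ hd.2 (indEq_mem_Icc X x ω).1 (indEq_mem_Icc X x ω).2⟩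

lemma sub_mul_indEq_mem_Icc {d t : ℝ} (hd : d ∈ Icc (0 : ℝ) 1) (ht : t ∈ Icc (0 : ℝ) 1)
    (X : Ω → α) (x : α) (ω : Ω) : (d - t) * indEq X x ω ∈ Icc (-1 : ℝ) 1 := by
  by_cases h : X ω = x <;> simp only [indEq, h, if_true, if_false, mul_one, mul_zero]
  · exact ⟨by linarith [hd.1, ht.2], by linarith [hd.2, ht.1]⟩
  · exact ⟨by norm_num, by norm_num⟩

lemma sq_sub_mul_indEq_le {d t : ℝ} (hd : d ∈ Icc (0 : ℝ) 1) (ht : t ∈ Icc (0 : ℝ) 1)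
    (X : Ω → α) (x : α) (ω : Ω) : ((d - t) * indEq X x ω) ^ 2 ≤ indEq X x ω := by
  by_cases h : X ω = x <;> simp only [indEq, h, if_true, if_false] <;>
    nlinarith [hd.1, hd.2, ht.1, ht.2]

lemma piHat_sub_sq_le_sum_countDeviation [Fintype α] (X : ℕ → Ω → α) (δ : ℕ → Ω → ℝ)
    (π q : α → ℝ) (ω : Ω) (hδ : ∀ j, δ j ω ∈ Icc (0 : ℝ) 1) (hπ : ∀ x, π x ∈ Icc (0 : ℝ) 1)
    (hq : ∀ x, 0 < q x) {n i : ℕ} (hi : i < n) :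
    (piHat X δ n i ω - π (X i ω)) ^ 2 ≤ ∑ x, countDeviation X δ π q n x ω := by
  set x₀ := X i ω
  set S := ∑ j ∈ range n, δ j ω * indEq (X j) x₀ ω
  set N := ∑ j ∈ range n, indEq (X j) x₀ ω
  have hN : 0 < N := by
    refine lt_of_lt_of_le ?_ (single_le_sum (fun j _ => (indEq_mem_Icc (X j) x₀ ω).1)
      (mem_range.2 hi))
    simp [indEq, x₀]
  have hS : 0 ≤ S := sum_nonneg fun j _ => (mul_indEq_mem_Icc (hδ j) (X j) x₀ ω).1
  have hSN : S ≤ N :=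
    sum_le_sum fun j _ => mul_le_of_le_one_left (indEq_mem_Icc _ x₀ ω).1 (hδ j).2
  have hT : ∑ j ∈ range n, (δ j ω - π x₀) * indEq (X j) x₀ ω = S - π x₀ * N := by
    simp only [S, N, mul_sum, ← sum_sub_distrib, sub_mul]
  have hW : ∑ j ∈ range n, (indEq (X j) x₀ ω - q x₀) = N - n * q x₀ := by
    simp [N, sum_sub_distrib]
  calc (piHat X δ n i ω - π x₀) ^ 2 = (S / N - π x₀) ^ 2 := rfl
    _ ≤ countDeviation X δ π q n x₀ ω := by
        rw [countDeviation, hT, hW]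
        exact sq_div_sub_le hS hSN hN (hπ x₀)
          (mul_pos (by exact_mod_cast i.zero_le.trans_lt hi) (hq x₀))
    _ ≤ ∑ x, countDeviation X δ π q n x ω :=
        single_le_sum (f := fun x => countDeviation X δ π q n x ω)
          (fun x _ => by unfold countDeviation; positivity) (mem_univ x₀)

end Counts

section Moments

variable {Ω α : Type*} [MeasurableSpace Ω] [MeasurableSpace α] [MeasurableSingletonClass α]
  {μ : Measure Ω}

lemma measurable_indEq [DecidableEq α] {X : Ω → α} (hX : Measurable X) (x : α) :
    Measurable (indEq X x) :=
  Measurable.ite (hX (measurableSet_singleton x)) measurable_const measurable_const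

lemma integrable_indEq [IsFiniteMeasure μ] [DecidableEq α] {X : Ω → α} (hX : Measurable X)
    (x : α) : Integrable (indEq X x) μ :=
  .of_mem_Icc 0 1 (measurable_indEq hX x).aemeasurable (ae_of_all _ (indEq_mem_Icc X x))

lemma integrable_mul_indEq [IsFiniteMeasure μ] [DecidableEq α] {X : Ω → α} (hX : Measurable X)
    {f : Ω → ℝ} (hfm : Measurable f) (hf : ∀ ω, f ω ∈ Icc (0 : ℝ) 1) (x : α) :
    Integrable (fun ω => f ω * indEq X x ω) μ :=
  .of_mem_Icc 0 1 (hfm.mul (measurable_indEq hX x)).aemeasurable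
    (ae_of_all _ fun ω => mul_indEq_mem_Icc (hf ω) X x ω)

lemma memLp_sub_mul_indEq [IsFiniteMeasure μ] [DecidableEq α] {X : Ω → α} (hX : Measurable X)
    {f : Ω → ℝ} (hfm : Measurable f) (hf : ∀ ω, f ω ∈ Icc (0 : ℝ) 1) {t : ℝ}
    (ht : t ∈ Icc (0 : ℝ) 1) (x : α) : MemLp (fun ω => (f ω - t) * indEq X x ω) 2 μ :=
  memLp_of_bounded (ae_of_all _ fun ω => sub_mul_indEq_mem_Icc (hf ω) ht X x ω)
    ((hfm.sub_const t).mul (measurable_indEq hX x)).aestronglyMeasurable 2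

lemma memLp_indEq_sub [IsFiniteMeasure μ] [DecidableEq α] {X : Ω → α} (hX : Measurable X)
    (x : α) (t : ℝ) : MemLp (fun ω => indEq X x ω - t) 2 μ :=
  memLp_of_bounded (a := -t) (b := 1 - t) (ae_of_all _ fun ω =>
    ⟨by linarith [(indEq_mem_Icc X x ω).1], by linarith [(indEq_mem_Icc X x ω).2]⟩)
    ((measurable_indEq hX x).sub_const t).aestronglyMeasurable 2

lemma integral_indEq [DecidableEq α] {X : Ω → α} (hX : Measurable X) (x : α) :
    ∫ ω, indEq X x ω ∂μ = μ.real (X ⁻¹' {x}) := by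
  rw [← integral_indicator_one (hX (measurableSet_singleton x))]
  congr 1 with ω
  by_cases h : X ω = x <;> simp [indEq, h]

lemma integral_mul_indEq_of_condExp [IsFiniteMeasure μ] [DecidableEq α] {X : Ω → α}
    (hX : Measurable X) {f : Ω → ℝ} (hf : Integrable f μ) {g : α → ℝ}
    (hfg : μ[f | MeasurableSpace.comap X inferInstance] =ᵐ[μ] fun ω => g (X ω)) (x : α) :
    ∫ ω, f ω * indEq X x ω ∂μ = g x * μ.real (X ⁻¹' {x}) := by
  have hs := hX (measurableSet_singleton x)
  have hs' : MeasurableSet[MeasurableSpace.comap X inferInstance] (X ⁻¹' {x}) :=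
    ⟨{x}, measurableSet_singleton x, rfl⟩
  calc ∫ ω, f ω * indEq X x ω ∂μ = ∫ ω in X ⁻¹' {x}, f ω ∂μ := by
        rw [← integral_indicator hs]
        congr 1 with ω
        by_cases h : X ω = x <;> simp [indEq, h]
    _ = ∫ ω in X ⁻¹' {x}, g (X ω) ∂μ := by
        rw [← setIntegral_condExp hX.comap_le hf hs']
        exact setIntegral_congr_ae hs (hfg.mono fun ω h _ => h)
    _ = g x * μ.real (X ⁻¹' {x}) := by
        rw [setIntegral_congr_fun hs (g := fun _ => g x) fun ω hω => by rw [hω.out],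
          setIntegral_const, smul_eq_mul, mul_comm]

lemma mem_Icc_of_condExp_comap [IsFiniteMeasure μ] {X : Ω → α} (hX : Measurable X)
    {f : Ω → ℝ} (hfm : Measurable f) (hf : ∀ ω, f ω ∈ Icc (0 : ℝ) 1) {g : α → ℝ}
    (hfg : μ[f | MeasurableSpace.comap X inferInstance] =ᵐ[μ] fun ω => g (X ω)) {x : α}
    (hx : 0 < μ.real (X ⁻¹' {x})) : g x ∈ Icc (0 : ℝ) 1 := by
  classical
  have hE := integral_mul_indEq_of_condExp hX
    (.of_mem_Icc 0 1 hfm.aemeasurable (ae_of_all _ hf)) hfg x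
  have hE_nonneg : 0 ≤ ∫ ω, f ω * indEq X x ω ∂μ :=
    integral_nonneg fun ω => (mul_indEq_mem_Icc (hf ω) X x ω).1
  have hE_le : ∫ ω, f ω * indEq X x ω ∂μ ≤ μ.real (X ⁻¹' {x}) := by
    rw [← integral_indEq hX x]
    exact integral_mono (integrable_mul_indEq hX hfm hf x) (integrable_indEq hX x)
      fun ω => mul_le_of_le_one_left (indEq_mem_Icc X x ω).1 (hf ω).2
  rw [hE] at hE_nonneg hE_le
  exact ⟨nonneg_of_mul_nonneg_left hE_nonneg hx, (mul_le_iff_le_one_left hx).1 hE_le⟩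

variable [DecidableEq α] [IsProbabilityMeasure μ]

lemma integral_sq_sum_sub_mul_indEq_le {X : ℕ → Ω → α} {δ : ℕ → Ω → ℝ}
    (hX : ∀ j, Measurable (X j)) (hδm : ∀ j, Measurable (δ j))
    (hδ : ∀ j ω, δ j ω ∈ Icc (0 : ℝ) 1) (hind : iIndepFun (fun j ω => (X j ω, δ j ω)) μ)
    {g : α → ℝ} (hprop : ∀ j, μ[δ j | MeasurableSpace.comap (X j) inferInstance] =ᵐ[μ]
      fun ω => g (X j ω))
    {x : α} (hgx : g x ∈ Icc (0 : ℝ) 1) {q : ℝ} (hq : ∀ j, μ.real (X j ⁻¹' {x}) = q)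
    (s : Finset ℕ) :
    ∫ ω, (∑ j ∈ s, (δ j ω - g x) * indEq (X j) x ω) ^ 2 ∂μ ≤ #s * q := by
  refine integral_sq_sum_le_of_indepFun s
    (fun j => memLp_sub_mul_indEq (hX j) (hδm j) (hδ j) hgx x) (fun j => ?_) (fun j => ?_)
    fun j k hjk => ?_
  · have hδint : Integrable (δ j) μ :=
      .of_mem_Icc 0 1 (hδm j).aemeasurable (ae_of_all _ (hδ j))
    simp only [sub_mul]
    rw [integral_sub (integrable_mul_indEq (hX j) (hδm j) (hδ j) x)
      ((integrable_indEq (hX j) x).const_mul _), integral_mul_indEq_of_condExp (hX j) hδint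
      (hprop j), integral_const_mul, integral_indEq (hX j), hq j, sub_self]
  · rw [← hq j, ← integral_indEq (hX j) x]
    exact integral_mono (memLp_sub_mul_indEq (hX j) (hδm j) (hδ j) hgx x).integrable_sq
      (integrable_indEq (hX j) x) fun ω => sq_sub_mul_indEq_le (hδ j ω) hgx (X j) x ω
  · have hg : Measurable fun r : α × ℝ => (r.2 - g x) * indEq Prod.fst x r :=
      (measurable_snd.sub_const _).mul (measurable_indEq measurable_fst x)
    exact (hind.indepFun hjk).comp hg hg

lemma integral_sq_sum_indEq_sub_le {X : ℕ → Ω → α} (hX : ∀ j, Measurable (X j))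
    (hind : iIndepFun X μ) {x : α} {q : ℝ} (hq : ∀ j, μ.real (X j ⁻¹' {x}) = q)
    (s : Finset ℕ) :
    ∫ ω, (∑ j ∈ s, (indEq (X j) x ω - q)) ^ 2 ∂μ ≤ #s * q := by
  have hsq : ∀ j ω, (indEq (X j) x ω - q) ^ 2 = (1 - 2 * q) * indEq (X j) x ω + q ^ 2 :=
    fun j ω => by by_cases h : X j ω = x <;> simp only [indEq, h, if_true, if_false] <;> ring
  refine integral_sq_sum_le_of_indepFun s (fun j => memLp_indEq_sub (hX j) x q) (fun j => ?_)
    (fun j => ?_) fun j k hjk => ?_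
  · rw [integral_sub (integrable_indEq (hX j) x) (integrable_const q), integral_indEq (hX j),
      hq j, integral_const, probReal_univ, one_smul, sub_self]
  · simp only [hsq]
    rw [integral_add ((integrable_indEq (hX j) x).const_mul _) (integrable_const _),
      integral_const_mul, integral_indEq (hX j), hq j, integral_const, probReal_univ, one_smul]
    nlinarith [sq_nonneg q]
  · have hg : Measurable fun a : α => indEq id x a - q :=
      (measurable_indEq measurable_id x).sub_const q
    exact (hind.indepFun hjk).comp hg hg

variable {X : ℕ → Ω → α} {δ : ℕ → Ω → ℝ} {g q : α → ℝ}

lemma integrable_countDeviation (hX : ∀ j, Measurable (X j)) (hδm : ∀ j, Measurable (δ j))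
    (hδ : ∀ j ω, δ j ω ∈ Icc (0 : ℝ) 1) {x : α} (hgx : g x ∈ Icc (0 : ℝ) 1) (n : ℕ) :
    Integrable (countDeviation X δ g q n x) μ := by
  have hTi := (memLp_finsetSum (range n) fun j _ =>
    memLp_sub_mul_indEq (μ := μ) (hX j) (hδm j) (hδ j) hgx x).integrable_sq
  have hWi := (memLp_finsetSum (range n) fun j _ =>
    memLp_indEq_sub (μ := μ) (hX j) x (q x)).integrable_sq
  exact ((hTi.add hWi).const_mul 4).div_const _

lemma integral_countDeviation_le (hX : ∀ j, Measurable (X j)) (hδm : ∀ j, Measurable (δ j))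
    (hδ : ∀ j ω, δ j ω ∈ Icc (0 : ℝ) 1) (hind : iIndepFun (fun j ω => (X j ω, δ j ω)) μ)
    (hprop : ∀ j, μ[δ j | MeasurableSpace.comap (X j) inferInstance] =ᵐ[μ]
      fun ω => g (X j ω))
    {x : α} (hgx : g x ∈ Icc (0 : ℝ) 1) (hqx : 0 < q x) (hq : ∀ j, μ.real (X j ⁻¹' {x}) = q x)
    {n : ℕ} (hn : 0 < n) :
    ∫ ω, countDeviation X δ g q n x ω ∂μ ≤ 8 / q x * (n : ℝ)⁻¹ := by
  have hT := integral_sq_sum_sub_mul_indEq_le hX hδm hδ hind hprop hgx hq (range n)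
  have hW := integral_sq_sum_indEq_sub_le hX (hind.comp (fun _ r => r.1) fun _ => measurable_fst)
    hq (range n)
  rw [card_range] at hT hW
  have hTi := (memLp_finsetSum (range n) fun j _ =>
    memLp_sub_mul_indEq (μ := μ) (hX j) (hδm j) (hδ j) hgx x).integrable_sq
  have hWi := (memLp_finsetSum (range n) fun j _ =>
    memLp_indEq_sub (μ := μ) (hX j) x (q x)).integrable_sq
  calc ∫ ω, countDeviation X δ g q n x ω ∂μ
      = 4 * ((∫ ω, (∑ j ∈ range n, (δ j ω - g x) * indEq (X j) x ω) ^ 2 ∂μ) +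
          ∫ ω, (∑ j ∈ range n, (indEq (X j) x ω - q x)) ^ 2 ∂μ) / (n * q x) ^ 2 := by
        simp only [countDeviation]
        rw [integral_div, integral_const_mul, integral_add hTi hWi]
    _ ≤ 4 * (n * q x + n * q x) / (n * q x) ^ 2 := by gcongr
    _ = 8 / q x * (n : ℝ)⁻¹ := by
        have : (0 : ℝ) < n := by exact_mod_cast hn
        field_simp
        ring

end Moments

theorem propensity_estimator_L2_rate_general
    {Ω : Type*} [MeasurableSpace Ω]
    {α : Type*} [MeasurableSpace α] [MeasurableSingletonClass α]
    (μ : Measure Ω) [IsProbabilityMeasure μ]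
    (Y : ℕ → Ω → ℝ) (X : ℕ → Ω → α) (δ : ℕ → Ω → ℝ)
    (hXm : ∀ i, Measurable (X i)) (hδm : ∀ i, Measurable (δ i))
    (hδ01 : ∀ i ω, δ i ω = 0 ∨ δ i ω = 1)
    -- the triples (Y_i, X_i, δ_i) are i.i.d.
    (hiid : ∀ i j, IdentDistrib (fun ω => (Y i ω, X i ω, δ i ω))
      (fun ω => (Y j ω, X j ω, δ j ω)) μ μ)
    (hindep : iIndepFun (fun i ω => (Y i ω, X i ω, δ i ω)) μ)
    (π : α → ℝ)
    -- π(X_i) = P(δ_i = 1 | X_i)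
    (hprop : ∀ i, μ[δ i | MeasurableSpace.comap (X i) inferInstance]
      =ᵐ[μ] fun ω => π (X i ω))
    [DecidableEq α]
    -- Assumption (A2): X takes finitely many values, each with probability ≥ pmin > 0
    [Finite α] (pmin : ℝ) (hpmin : 0 < pmin)
    (hp : ∀ x : α, pmin ≤ (μ (X 0 ⁻¹' {x})).toReal)
    : ∃ C : ℝ, ∀ᶠ n in atTop, ∀ i, i < n →
      (∫ ω, (piHat X δ n i ω - π (X i ω)) ^ 2 ∂μ) ≤ C * (n : ℝ)⁻¹ := by
  cases nonempty_fintype α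
  set p : α → ℝ := fun x => μ.real (X 0 ⁻¹' {x})
  have hXdist : ∀ j x, μ.real (X j ⁻¹' {x}) = p x := fun j x => by
    have hXj : IdentDistrib (X j) (X 0) μ μ := (hiid j 0).comp measurable_snd.fst
    simp only [p, measureReal_def, hXj.measure_mem_eq (measurableSet_singleton x)]
  have hp_pos : ∀ x, 0 < p x := fun x => hpmin.trans_le (hp x)
  have hδ : ∀ j ω, δ j ω ∈ Icc (0 : ℝ) 1 := fun j ω => by rcases hδ01 j ω with h | h <;> simp [h]
  have hπ : ∀ x, π x ∈ Icc (0 : ℝ) 1 := fun x =>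
    mem_Icc_of_condExp_comap (hXm 0) (hδm 0) (hδ 0) (hprop 0) (hp_pos x)
  have hind : iIndepFun (fun j ω => (X j ω, δ j ω)) μ :=
    hindep.comp (fun _ r => r.2) fun _ => measurable_snd
  refine ⟨∑ x, 8 / p x, ?_⟩
  filter_upwards [eventually_gt_atTop 0] with n hn i hi
  calc ∫ ω, (piHat X δ n i ω - π (X i ω)) ^ 2 ∂μ
      ≤ ∫ ω, ∑ x, countDeviation X δ π p n x ω ∂μ :=
        integral_mono_of_nonneg (ae_of_all _ fun _ => sq_nonneg _)
          (integrable_finsetSum _ fun x _ => integrable_countDeviation hXm hδm hδ (hπ x) n)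
          (ae_of_all _ fun ω =>
            piHat_sub_sq_le_sum_countDeviation X δ π p ω (hδ · ω) hπ hp_pos hi)
    _ = ∑ x, ∫ ω, countDeviation X δ π p n x ω ∂μ :=
        integral_finsetSum _ fun x _ => integrable_countDeviation hXm hδm hδ (hπ x) n
    _ ≤ ∑ x, 8 / p x * (n : ℝ)⁻¹ := sum_le_sum fun x _ =>
        integral_countDeviation_le hXm hδm hδ hind hprop (hπ x) (hp_pos x) (hXdist · x) hn
    _ = (∑ x, 8 / p x) * (n : ℝ)⁻¹ := (sum_mul ..).symm

/-- Under Assumptions (A1) and (A2), the nonparametric propensity-score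
estimator is uniformly `n⁻¹`-accurate in `L²`:
`E[(π̂_i(X_{1:n}) − π(X_i))²] = O(n⁻¹)`, uniformly over `i ∈ {1,…,n}`. -/
theorem propensity_estimator_L2_rate
    {Ω : Type*} [MeasurableSpace Ω] [StandardBorelSpace Ω]
    {α : Type*} [MeasurableSpace α] [MeasurableSingletonClass α] [Countable α]
    (μ : Measure Ω) [IsProbabilityMeasure μ]
    (Y : ℕ → Ω → ℝ) (X : ℕ → Ω → α) (δ : ℕ → Ω → ℝ)
    (hYm : ∀ i, Measurable (Y i)) (hXm : ∀ i, Measurable (X i)) (hδm : ∀ i, Measurable (δ i))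
    (hY01 : ∀ i ω, Y i ω ∈ Set.Icc (0 : ℝ) 1)
    (hδ01 : ∀ i ω, δ i ω = 0 ∨ δ i ω = 1)
    -- the triples (Y_i, X_i, δ_i) are i.i.d.
    (hiid : ∀ i j, IdentDistrib (fun ω => (Y i ω, X i ω, δ i ω))
      (fun ω => (Y j ω, X j ω, δ j ω)) μ μ)
    (hindep : iIndepFun (fun i ω => (Y i ω, X i ω, δ i ω)) μ)
    -- Assumption (A1): the propensity score is bounded below by πmin > 0
    (π : α → ℝ) (πmin : ℝ) (hπmin : 0 < πmin) (hπ : ∀ x, πmin ≤ π x)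
    -- π(X_i) = P(δ_i = 1 | X_i)
    (hprop : ∀ i, μ[δ i | MeasurableSpace.comap (X i) inferInstance]
      =ᵐ[μ] fun ω => π (X i ω))
    -- MAR: δ_i is independent of Y_i conditionally on X_i
    (hMAR : ∀ i, CondIndepFun (MeasurableSpace.comap (X i) inferInstance)
      ((hXm i).comap_le) (δ i) (Y i) μ)
    [DecidableEq α]
    -- Assumption (A2): X takes finitely many values, each with probability ≥ pmin > 0
    [Finite α] (pmin : ℝ) (hpmin : 0 < pmin)
    (hp : ∀ x : α, pmin ≤ (μ (X 0 ⁻¹' {x})).toReal)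
    : ∃ C : ℝ, ∀ᶠ n in atTop, ∀ i, i < n →
      (∫ ω, (piHat X δ n i ω - π (X i ω)) ^ 2 ∂μ) ≤ C * (n : ℝ)⁻¹ :=
  propensity_estimator_L2_rate_general μ Y X δ hXm hδm hδ01 hiid hindep π hprop pmin hpmin hp
end
end
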